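/- arXiv:1601.03226 — 2 statements merged into one kernel-verified Lean document; each statement's English description precedes it below -/
import Mathlib

section
/- Araki–Lieb-type triangle inequality for log-determinant: Let n_A, n_B be positive integers, n = n_A + n_B, and let V be a 2n×2n real symmetric bona fide covariance matrix of a system of n modes partitioned into groups A and B of n_A and n_B modes. Then log det V ≥ |log det V_A − log det V_B|. -/
open Matrix
open scoped ComplexOrder

noncomputable section

/-- The 2×2 symplectic form σ = [[0,1],[-1,0]]. -/
def symp : Matrix (Fin 2) (Fin 2) ℝ := !![0, 1; -1, 0]

/-- The symplectic form on a system whose modes are indexed by `α`: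
the direct sum of one copy of `σ` per mode. -/
def Jmat (α : Type*) [DecidableEq α] : Matrix (α × Fin 2) (α × Fin 2) ℝ :=
  fun p q => if p.1 = q.1 then symp p.2 q.2 else 0

/-- A real symmetric matrix `V` on phase space is a bona fide covariance matrix
if the complex Hermitian matrix `V + i J` is positive semidefinite. -/
def BonaFide {α : Type*} [Fintype α] [DecidableEq α]
    (V : Matrix (α × Fin 2) (α × Fin 2) ℝ) : Prop :=
  ((V.map (Complex.ofReal)) + Complex.I • ((Jmat α).map (Complex.ofReal))).PosSemidef

/-!
Positivity of `V + iJ` on vectors `x + iy` says `2 xᵀJy ≤ xᵀVx + yᵀVy` for real `x, y`. This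
forces `V > 0` and, testing with `y = -V⁻¹Jx`, `V ≥ JᵀV⁻¹J`. Compressing to the modes `A`, where
`J` is block diagonal and the `A`-block of `V⁻¹` is the inverse of the Schur complement
`S = V/V_B`, gives `V_A ≥ J_Aᵀ S⁻¹ J_A`. The determinant is monotone on positive definite
matrices and `det J = ±1`, so `det V_A ≥ det S⁻¹ = det V_B / det V`, i.e.
`log det V_B - log det V_A ≤ log det V`; exchanging `A` and `B` gives the other half.
-/

theorem eq_zero_of_forall_mul_le {a b : ℝ} (h : ∀ t : ℝ, t * a ≤ b) : a = 0 := by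
  by_contra ha
  have := h ((b + 1) / a)
  rw [div_mul_cancel₀ _ ha] at this
  linarith

namespace Matrix

variable {m n : Type*} [Fintype m] [DecidableEq m] [Fintype n] [DecidableEq n]

theorem PosSemidef.one_le_det_one_add {Z : Matrix n n ℝ} (hZ : Z.PosSemidef) :
    1 ≤ (1 + Z).det := by
  have hH : (1 + Z).IsHermitian := isHermitian_one.add hZ.isHermitian
  rw [hH.det_eq_prod_eigenvalues]
  refine Finset.one_le_prod fun i _ => ?_
  have hv : star ⇑(hH.eigenvectorBasis i) ⬝ᵥ ⇑(hH.eigenvectorBasis i) = 1 := by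
    rw [dotProduct_comm, ← EuclideanSpace.inner_eq_star_dotProduct, real_inner_self_eq_norm_sq,
      hH.eigenvectorBasis.orthonormal.1 i, one_pow]
  rw [RCLike.ofReal_real_eq_id, id, hH.eigenvalues_eq, add_mulVec, one_mulVec, dotProduct_add,
    hv, map_add, RCLike.re_to_real, RCLike.re_to_real]
  exact le_add_of_nonneg_right (hZ.dotProduct_mulVec_nonneg _)

open scoped MatrixOrder in
theorem PosDef.det_le_det {X Y : Matrix n n ℝ} (hY : Y.PosDef) (hXY : (X - Y).PosSemidef) :
    Y.det ≤ X.det := by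
  set S := CFC.sqrt Y
  have hSS : S * S = Y := CFC.sqrt_mul_sqrt_self Y hY.posSemidef.nonneg
  have hS : IsUnit S.det :=
    (isUnit_iff_isUnit_det S).mp (isUnit_of_mul_isUnit_left (hSS ▸ hY.isUnit))
  have hSinv : (S⁻¹)ᴴ = S⁻¹ := (CFC.sqrt_nonneg Y).posSemidef.isHermitian.inv
  have hZ : (S⁻¹ * (X - Y) * S⁻¹).PosSemidef := by
    simpa only [hSinv] using hXY.mul_mul_conjTranspose_same S⁻¹
  have hX : X = S * (1 + S⁻¹ * (X - Y) * S⁻¹) * S := by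
    rw [mul_add, add_mul, mul_one, hSS, ← mul_assoc, ← mul_assoc, mul_nonsing_inv S hS, one_mul,
      mul_assoc, nonsing_inv_mul S hS, mul_one, add_sub_cancel]
  calc Y.det = Y.det * 1 := (mul_one _).symm
    _ ≤ Y.det * (1 + S⁻¹ * (X - Y) * S⁻¹).det :=
      mul_le_mul_of_nonneg_left hZ.one_le_det_one_add hY.det_pos.le
    _ = X.det := by
      conv_rhs => rw [hX]
      rw [det_mul, det_mul, ← hSS, det_mul]
      ring

theorem det_toBlocks₁₁_inv_mul_det_fromBlocks {R : Type*} [CommRing R] (A : Matrix m m R)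
    (B : Matrix m n R) (C : Matrix n m R) (D : Matrix n n R) [Invertible D]
    [Invertible (fromBlocks A B C D)] :
    (fromBlocks A B C D)⁻¹.toBlocks₁₁.det * (fromBlocks A B C D).det = D.det := by
  let := invertibleOfFromBlocks₂₂Invertible A B C D
  rw [← invOf_eq_nonsing_inv, invOf_fromBlocks₂₂_eq, toBlocks_fromBlocks₁₁, det_fromBlocks₂₂,
    mul_left_comm, ← det_mul, invOf_mul_self, det_one, mul_one]

theorem PosDef.det_toBlocks₂₂_le_det_mul_det_toBlocks₁₁ {W : Matrix (m ⊕ n) (m ⊕ n) ℝ}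
    (hW : W.PosDef) {J : Matrix m m ℝ} (hJ : J.det * J.det = 1)
    (h : (W.toBlocks₁₁ - Jᵀ * W⁻¹.toBlocks₁₁ * J).PosSemidef) :
    W.toBlocks₂₂.det ≤ W.det * W.toBlocks₁₁.det := by
  obtain ⟨A, B, C, D, rfl⟩ : ∃ A B C D, fromBlocks A B C D = W :=
    ⟨_, _, _, _, fromBlocks_toBlocks W⟩
  have hD : D.PosDef := hW.submatrix Sum.inr_injective
  have hInv : (fromBlocks A B C D)⁻¹.toBlocks₁₁.PosDef := hW.inv.submatrix Sum.inl_injective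
  have hJ_inj : Function.Injective J.mulVec := mulVec_injective_iff_isUnit.mpr <|
    (isUnit_iff_isUnit_det J).mpr (.of_mul_eq_one _ hJ)
  rw [toBlocks_fromBlocks₁₁] at h ⊢
  have hle : (fromBlocks A B C D)⁻¹.toBlocks₁₁.det ≤ A.det := by
    have := (hInv.conjTranspose_mul_mul_same hJ_inj).det_le_det
      (by rwa [conjTranspose_eq_transpose_of_trivial])
    rwa [det_mul, det_mul, det_conjTranspose, star_trivial, mul_right_comm, hJ, one_mul] at this
  have := hD.isUnit.invertible
  have := hW.isUnit.invertible
  rw [toBlocks_fromBlocks₂₂]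
  calc D.det = _ := (det_toBlocks₁₁_inv_mul_det_fromBlocks A B C D).symm
    _ ≤ _ := mul_le_mul_of_nonneg_right hle hW.det_pos.le
    _ = _ := mul_comm _ _

end Matrix

section Symplectic

variable {α β : Type*} [DecidableEq α] [DecidableEq β]

theorem Jmat_apply_swap (p q : α × Fin 2) : Jmat α q p = -Jmat α p q := by
  obtain ⟨a, i⟩ := p
  obtain ⟨b, j⟩ := q
  by_cases h : a = b
  · subst h
    fin_cases i <;> fin_cases j <;> simp [Jmat, symp]
  · simp [Jmat, h, Ne.symm h]

theorem Jmat_transpose : (Jmat α)ᵀ = -Jmat α := by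
  ext p q
  exact Jmat_apply_swap p q

theorem Jmat_submatrix_prodMap {f : β → α} (hf : Function.Injective f) :
    (Jmat α).submatrix (Prod.map f id) (Prod.map f id) = Jmat β := by
  ext p q
  simp [Jmat, hf.eq_iff]

theorem Jmat_submatrix_sumProdDistrib :
    (Jmat (α ⊕ β)).submatrix (Equiv.sumProdDistrib α β (Fin 2)).symm
      (Equiv.sumProdDistrib α β (Fin 2)).symm = fromBlocks (Jmat α) 0 0 (Jmat β) := by
  ext (p | p) (q | q) <;> simp [Jmat]

variable [Fintype α]

theorem dotProduct_Jmat_mulVec_swap (x y : α × Fin 2 → ℝ) :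
    y ⬝ᵥ Jmat α *ᵥ x = -(x ⬝ᵥ Jmat α *ᵥ y) := by
  rw [dotProduct_mulVec, ← mulVec_transpose, Jmat_transpose, neg_mulVec, neg_dotProduct,
    dotProduct_comm]

theorem Jmat_mul_Jmat : Jmat α * Jmat α = -1 := by
  ext ⟨a, i⟩ ⟨b, j⟩
  rw [mul_apply, Fintype.sum_prod_type]
  by_cases h : a = b
  · subst h
    fin_cases i <;> fin_cases j <;> simp [Jmat, symp, Fin.sum_univ_two]
  · simp [Jmat, h]

theorem det_Jmat_mul_det_Jmat : (Jmat α).det * (Jmat α).det = 1 := by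
  rw [← det_mul, Jmat_mul_Jmat, det_neg, det_one, Fintype.card_prod, Fintype.card_fin, mul_one,
    pow_mul', neg_one_sq, one_pow]

end Symplectic

/-- The paper's `V_X`, for `X` the image of `f`. -/
def Matrix.restrictModes {R α β : Type*} (V : Matrix (α × Fin 2) (α × Fin 2) R) (f : β → α) :
    Matrix (β × Fin 2) (β × Fin 2) R :=
  V.submatrix (Prod.map f id) (Prod.map f id)

theorem Matrix.det_restrictModes_equiv {R α β : Type*} [CommRing R] [Fintype α] [DecidableEq α]
    [Fintype β] [DecidableEq β] (V : Matrix (α × Fin 2) (α × Fin 2) R) (e : β ≃ α) :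
    (V.restrictModes e).det = V.det :=
  det_submatrix_equiv_self (e.prodCongr (Equiv.refl _)) V

theorem Matrix.IsSymm.restrictModes {R α β : Type*} {V : Matrix (α × Fin 2) (α × Fin 2) R}
    (hV : V.IsSymm) (f : β → α) : (V.restrictModes f).IsSymm :=
  hV.submatrix _

namespace BonaFide

variable {α β : Type*} [Fintype α] [DecidableEq α] {V : Matrix (α × Fin 2) (α × Fin 2) ℝ}

theorem restrictModes [Fintype β] [DecidableEq β] (hbf : BonaFide V) {f : β → α}
    (hf : Function.Injective f) : BonaFide (V.restrictModes f) := by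
  rw [BonaFide, ← Jmat_submatrix_prodMap hf]
  exact hbf.submatrix (Prod.map f id)

theorem two_mul_dotProduct_Jmat_mulVec_le (hbf : BonaFide V) (x y : α × Fin 2 → ℝ) :
    2 * (x ⬝ᵥ Jmat α *ᵥ y) ≤ x ⬝ᵥ V *ᵥ x + y ⬝ᵥ V *ᵥ y := by
  let z : α × Fin 2 → ℂ := fun i => x i + Complex.I * y i
  have hz := (Complex.le_def.mp (hbf.dotProduct_mulVec_nonneg z)).1
  have hre : (star z ⬝ᵥ (V.map Complex.ofReal + Complex.I • (Jmat α).map Complex.ofReal) *ᵥ z).re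
      = x ⬝ᵥ V *ᵥ x + y ⬝ᵥ V *ᵥ y + (y ⬝ᵥ Jmat α *ᵥ x - x ⬝ᵥ Jmat α *ᵥ y) := by
    simp only [dotProduct, mulVec, Finset.mul_sum, Complex.re_sum, ← Finset.sum_add_distrib,
      ← Finset.sum_sub_distrib]
    refine Finset.sum_congr rfl fun i _ => Finset.sum_congr rfl fun j _ => ?_
    simp only [z, Pi.star_apply, star_add, RCLike.star_def, Complex.conj_ofReal, star_mul',
      Complex.conj_I, Matrix.add_apply, map_apply, Matrix.smul_apply, smul_eq_mul, Complex.mul_re,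
      Complex.add_re, Complex.add_im, Complex.mul_im, Complex.ofReal_re, Complex.ofReal_im,
      Complex.neg_re, Complex.neg_im, Complex.I_re, Complex.I_im]
    ring
  rw [dotProduct_Jmat_mulVec_swap] at hre
  rw [hre, Complex.zero_re] at hz
  linarith

theorem posDef (hsymm : V.IsSymm) (hbf : BonaFide V) : V.PosDef := by
  refine .of_dotProduct_mulVec_pos (by rwa [IsHermitian, conjTranspose_eq_transpose_of_trivial])
    fun x hx => ?_
  rw [star_trivial]
  by_contra! hxVx
  have hbound (t : ℝ) : t * (-2 * (x ⬝ᵥ x)) ≤ (Jmat α *ᵥ x) ⬝ᵥ V *ᵥ (Jmat α *ᵥ x) := by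
    have := hbf.two_mul_dotProduct_Jmat_mulVec_le (t • x) (Jmat α *ᵥ x)
    rw [mulVec_mulVec, Jmat_mul_Jmat, neg_mulVec, one_mulVec, dotProduct_neg, mulVec_smul,
      smul_dotProduct, dotProduct_smul, smul_dotProduct, smul_eq_mul, smul_eq_mul,
      smul_eq_mul] at this
    nlinarith [sq_nonneg t]
  exact hx (dotProduct_self_eq_zero.mp (by linarith [eq_zero_of_forall_mul_le hbound]))

theorem posSemidef_sub_transpose_mul_inv_mul (hsymm : V.IsSymm) (hbf : BonaFide V) :
    (V - (Jmat α)ᵀ * V⁻¹ * Jmat α).PosSemidef := by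
  have hV := hbf.posDef hsymm
  have hJVJ : ((Jmat α)ᵀ * V⁻¹ * Jmat α).PosSemidef := by
    simpa only [conjTranspose_eq_transpose_of_trivial] using
      hV.inv.posSemidef.conjTranspose_mul_mul_same (Jmat α)
  refine .of_dotProduct_mulVec_nonneg (hV.isHermitian.sub hJVJ.isHermitian) fun x => ?_
  set u := Jmat α *ᵥ x
  set w := V⁻¹ *ᵥ u
  have hVw : V *ᵥ w = u := by
    rw [mulVec_mulVec, mul_nonsing_inv V ((isUnit_iff_isUnit_det V).mp hV.isUnit), one_mulVec]
  have hJVJx : x ⬝ᵥ ((Jmat α)ᵀ * V⁻¹ * Jmat α) *ᵥ x = w ⬝ᵥ u := by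
    rw [← mulVec_mulVec, ← mulVec_mulVec, dotProduct_mulVec, vecMul_transpose, dotProduct_comm]
  have := hbf.two_mul_dotProduct_Jmat_mulVec_le x (-w)
  simp only [mulVec_neg, dotProduct_neg, neg_dotProduct, neg_neg, hVw,
    ← dotProduct_Jmat_mulVec_swap] at this
  rw [star_trivial, sub_mulVec, dotProduct_sub, hJVJx]
  linarith

theorem det_restrictModes_inr_le [Fintype β] [DecidableEq β] {V : Matrix ((α ⊕ β) × Fin 2) ((α ⊕ β) × Fin 2) ℝ}
    (hsymm : V.IsSymm) (hbf : BonaFide V) :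
    (V.restrictModes Sum.inr).det ≤ V.det * (V.restrictModes Sum.inl).det := by
  let e := (Equiv.sumProdDistrib α β (Fin 2)).symm
  let W := V.submatrix e e
  have hW : W.PosDef := (hbf.posDef hsymm).submatrix e.injective
  have hblocks : (W - (fromBlocks (Jmat α) 0 0 (Jmat β))ᵀ * W⁻¹ *
      fromBlocks (Jmat α) 0 0 (Jmat β)).PosSemidef := by
    rw [← Jmat_submatrix_sumProdDistrib, inv_submatrix_equiv, transpose_submatrix,
      submatrix_mul_equiv, submatrix_mul_equiv]
    exact (hbf.posSemidef_sub_transpose_mul_inv_mul hsymm).submatrix e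
  have hblock₁₁ : (W.toBlocks₁₁ - (Jmat α)ᵀ * W⁻¹.toBlocks₁₁ * Jmat α).PosSemidef := by
    convert hblocks.submatrix Sum.inl using 1
    rw [← fromBlocks_toBlocks W⁻¹, fromBlocks_transpose, fromBlocks_multiply, fromBlocks_multiply]
    ext p q
    simp [toBlocks₁₁]
  have := hW.det_toBlocks₂₂_le_det_mul_det_toBlocks₁₁ det_Jmat_mul_det_Jmat hblock₁₁
  rwa [det_submatrix_equiv_self] at this

end BonaFide

theorem logdet_triangle_inequality_general (nA nB : ℕ)
    (V : Matrix ((Fin nA ⊕ Fin nB) × Fin 2) ((Fin nA ⊕ Fin nB) × Fin 2) ℝ)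
    (hsymm : V.IsSymm) (hbf : BonaFide V) :
    Real.log V.det ≥
      |Real.log ((V.submatrix
            (fun p : Fin nA × Fin 2 => (Sum.inl p.1, p.2))
            (fun p : Fin nA × Fin 2 => (Sum.inl p.1, p.2))).det)
        - Real.log ((V.submatrix
            (fun p : Fin nB × Fin 2 => (Sum.inr p.1, p.2))
            (fun p : Fin nB × Fin 2 => (Sum.inr p.1, p.2))).det)| := by
  let swap := Equiv.sumComm (Fin nB) (Fin nA)
  have hV := (hbf.posDef hsymm).det_pos
  have hA := ((hbf.restrictModes Sum.inl_injective).posDef (hsymm.restrictModes _)).det_pos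
  have hB := ((hbf.restrictModes Sum.inr_injective).posDef (hsymm.restrictModes _)).det_pos
  have hBA : (V.restrictModes Sum.inr).det ≤ V.det * (V.restrictModes Sum.inl).det :=
    hbf.det_restrictModes_inr_le hsymm
  have hAB : (V.restrictModes Sum.inl).det ≤ V.det * (V.restrictModes Sum.inr).det := by
    have := (hbf.restrictModes swap.injective).det_restrictModes_inr_le (hsymm.restrictModes _)
    rwa [det_restrictModes_equiv] at this
  change _ ≥ |Real.log (V.restrictModes Sum.inl).det - Real.log (V.restrictModes Sum.inr).det|
  rw [ge_iff_le, abs_sub_le_iff, sub_le_iff_le_add, sub_le_iff_le_add, ← Real.log_mul hV.ne' hB.ne',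
    ← Real.log_mul hV.ne' hA.ne']
  exact ⟨Real.log_le_log hA hAB, Real.log_le_log hB hBA⟩

/-- **Araki–Lieb-type triangle inequality for the log-determinant.** For any
bona fide covariance matrix of a system of `nA + nB` modes,
`log det V ≥ |log det V_A − log det V_B|`. -/
theorem logdet_triangle_inequality (nA nB : ℕ) (hA : 0 < nA) (hB : 0 < nB)
    (V : Matrix ((Fin nA ⊕ Fin nB) × Fin 2) ((Fin nA ⊕ Fin nB) × Fin 2) ℝ)
    (hsymm : V.IsSymm) (hbf : BonaFide V) :
    Real.log V.det ≥
      |Real.log ((V.submatrix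
            (fun p : Fin nA × Fin 2 => (Sum.inl p.1, p.2))
            (fun p : Fin nA × Fin 2 => (Sum.inl p.1, p.2))).det)
        - Real.log ((V.submatrix
            (fun p : Fin nB × Fin 2 => (Sum.inr p.1, p.2))
            (fun p : Fin nB × Fin 2 => (Sum.inr p.1, p.2))).det)| :=
  logdet_triangle_inequality_general nA nB V hsymm hbf

end
end

section
/- Concavity of f_n in m: For every positive integer n, the function m ↦ f_n(m) is concave on (0, ∞): for all real x, y > 0 and t ∈ [0,1], f_n(t·x + (1−t)·y) ≥ t·f_n(x) + (1−t)·f_n(y). -/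
/-!
Scaling out `n`, `f n m = n / 2 * fReduced (m / (4 * n))` with
`fReduced u = log ((e^{4u} - 1) / 4) + e^{2u} log coth u`. Differentiating, the derivative of the
first term cancels the term coming from `(log coth)' = -1 / (sinh u cosh u)`, leaving
`fReduced' u = 2 e^{2u} log coth u`, and then `fReduced'' u = 4 e^{2u} (L - 1 / sinh 2u)` with
`L = log coth u`. This is nonpositive because `sinh L = (coth u - tanh u) / 2 = 1 / sinh 2u`
and `L ≤ sinh L` for `L ≥ 0`.
-/

/-- The function `f_n(m)` of Eq. (13): tight bound relating von Neumann entropy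
and log-determinant of Gaussian states, with `coth t = cosh t / sinh t`. -/
noncomputable def f (n : ℕ) (m : ℝ) : ℝ :=
  ((n : ℝ) / 2) * (Real.log ((Real.exp (m / (n : ℝ)) - 1) / 4)
    + Real.exp (m / (2 * (n : ℝ))) *
        Real.log (Real.cosh (m / (4 * (n : ℝ))) / Real.sinh (m / (4 * (n : ℝ)))))

open Real Set

lemma log_cosh_div_sinh_le {u : ℝ} (hu : 0 < u) :
    log (cosh u / sinh u) ≤ (2 * sinh u * cosh u)⁻¹ := by
  have hs : 0 < sinh u := sinh_pos_iff.2 hu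
  have hc : 0 < cosh u := cosh_pos u
  have hL : 0 ≤ log (cosh u / sinh u) := log_nonneg ((one_le_div hs).2 (sinh_lt_cosh u).le)
  calc log (cosh u / sinh u) ≤ sinh (log (cosh u / sinh u)) := self_le_sinh_iff.2 hL
    _ = (2 * sinh u * cosh u)⁻¹ := by
      rw [sinh_log (by positivity)]
      field_simp
      linear_combination cosh_sq_sub_sinh_sq u

lemma hasDerivAt_log_cosh_div_sinh {u : ℝ} (hu : u ≠ 0) :
    HasDerivAt (fun u ↦ log (cosh u / sinh u)) (-(sinh u * cosh u)⁻¹) u := by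
  have hs : sinh u ≠ 0 := sinh_ne_zero.2 hu
  have hc : cosh u ≠ 0 := (cosh_pos u).ne'
  have hq : HasDerivAt (fun u ↦ cosh u / sinh u) _ u :=
    (hasDerivAt_cosh u).div (hasDerivAt_sinh u) hs
  refine (hq.log (div_ne_zero hc hs)).congr_deriv ?_
  field_simp
  linear_combination -cosh_sq_sub_sinh_sq u

lemma sinh_mul_cosh_eq (u : ℝ) :
    sinh u * cosh u = (exp (4 * u) - 1) / (4 * exp (2 * u)) := by
  have h2 : exp (2 * u) = exp u ^ 2 := by rw [← exp_nat_mul]; norm_num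
  have h4 : exp (4 * u) = exp u ^ 4 := by rw [← exp_nat_mul]; norm_num
  rw [sinh_eq, cosh_eq, exp_neg, h2, h4]
  field_simp
  ring

noncomputable def fReduced (u : ℝ) : ℝ :=
  log ((exp (4 * u) - 1) / 4) + exp (2 * u) * log (cosh u / sinh u)

lemma f_eq_fReduced (n : ℕ) : f n = fun m ↦ n / 2 * fReduced (m / (4 * n)) := by
  ext m
  rcases eq_or_ne (n : ℝ) 0 with hn | hn
  · simp [f, hn]
  · simp only [f, fReduced]
    congr 5 <;> field_simp; ring

lemma hasDerivAt_fReduced {u : ℝ} (hu : u ≠ 0) :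
    HasDerivAt fReduced (2 * exp (2 * u) * log (cosh u / sinh u)) u := by
  have h4 : exp (4 * u) - 1 ≠ 0 := sub_ne_zero.2 (by simp [hu])
  have hA := ((((hasDerivAt_id u).const_mul 4).exp.sub_const 1).div_const 4).log
    (div_ne_zero h4 four_ne_zero)
  have hB := ((hasDerivAt_id u).const_mul 2).exp
  refine (hA.add (hB.mul (hasDerivAt_log_cosh_div_sinh hu))).congr_deriv ?_
  have h42 : exp (4 * u) = exp (2 * u) ^ 2 := by rw [← exp_nat_mul]; ring_nf
  simp only [id]
  rw [sinh_mul_cosh_eq]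
  rw [h42] at h4 ⊢
  field_simp
  ring

lemma hasDerivAt_deriv_fReduced {u : ℝ} (hu : u ≠ 0) :
    HasDerivAt (fun u ↦ 2 * exp (2 * u) * log (cosh u / sinh u))
      (4 * exp (2 * u) * (log (cosh u / sinh u) - (2 * sinh u * cosh u)⁻¹)) u := by
  have hB := (((hasDerivAt_id u).const_mul 2).exp).const_mul 2
  refine (hB.mul (hasDerivAt_log_cosh_div_sinh hu)).congr_deriv ?_
  simp only [id]
  ring

lemma concaveOn_fReduced : ConcaveOn ℝ (Ioi 0) fReduced := by
  refine concaveOn_of_hasDerivWithinAt2_nonpos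
    (f' := fun u ↦ 2 * exp (2 * u) * log (cosh u / sinh u))
    (f'' := fun u ↦ 4 * exp (2 * u) * (log (cosh u / sinh u) - (2 * sinh u * cosh u)⁻¹))
    (convex_Ioi 0)
    (fun u hu ↦ (hasDerivAt_fReduced (ne_of_gt hu)).continuousAt.continuousWithinAt) ?_ ?_ ?_ <;>
    rw [interior_Ioi]
  · exact fun u hu ↦ (hasDerivAt_fReduced (ne_of_gt hu)).hasDerivWithinAt
  · exact fun u hu ↦ (hasDerivAt_deriv_fReduced (ne_of_gt hu)).hasDerivWithinAt
  · exact fun u hu ↦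
      mul_nonpos_of_nonneg_of_nonpos (by positivity) (sub_nonpos.2 (log_cosh_div_sinh_le hu))

lemma ConcaveOn.const_mul_comp_div {g : ℝ → ℝ} (hg : ConcaveOn ℝ (Ioi 0) g) {a c : ℝ}
    (ha : 0 ≤ a) (hc : 0 < c) : ConcaveOn ℝ (Ioi 0) (fun x ↦ a * g (x / c)) := by
  refine ⟨convex_Ioi 0, fun x hx y hy s t hs ht hst ↦ ?_⟩
  have hxc : 0 < x / c := div_pos hx hc
  have hyc : 0 < y / c := div_pos hy hc
  calc s • (a * g (x / c)) + t • (a * g (y / c)) = a * (s • g (x / c) + t • g (y / c)) := by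
        simp only [smul_eq_mul]; ring
    _ ≤ a * g (s • (x / c) + t • (y / c)) := by gcongr; exact hg.2 hxc hyc hs ht hst
    _ = a * g ((s • x + t • y) / c) := by simp only [smul_eq_mul]; ring_nf

lemma concaveOn_f (n : ℕ) : ConcaveOn ℝ (Ioi 0) (f n) := by
  rcases n.eq_zero_or_pos with rfl | hn
  · have hf0 : f 0 = fun _ ↦ 0 := by ext m; simp [f]
    exact hf0 ▸ concaveOn_const 0 (convex_Ioi 0)
  rw [f_eq_fReduced]
  exact concaveOn_fReduced.const_mul_comp_div (by positivity) (by positivity)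

theorem f_concaveOn_general (n : ℕ) (x y : ℝ) (hx : 0 < x) (hy : 0 < y)
    (t : ℝ) (ht0 : 0 ≤ t) (ht1 : t ≤ 1) :
    f n (t * x + (1 - t) * y) ≥ t * f n x + (1 - t) * f n y :=
  (concaveOn_f n).2 hx hy ht0 (sub_nonneg.2 ht1) (add_sub_cancel t 1)

/-- **Concavity of `f_n` in `m`**: for every positive integer `n`, the map
`m ↦ f n m` is concave on `(0, ∞)`. -/
theorem f_concaveOn (n : ℕ) (hn : 0 < n) (x y : ℝ) (hx : 0 < x) (hy : 0 < y)
    (t : ℝ) (ht0 : 0 ≤ t) (ht1 : t ≤ 1) :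
    f n (t * x + (1 - t) * y) ≥ t * f n x + (1 - t) * f n y :=
  f_concaveOn_general n x y hx hy t ht0 ht1
end
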